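/- Let Ω be a measurable space, let X : Ω → ℝ be measurable, and let μ and ν be probability measures on Ω with respect to both of which X is square-integrable. Fix λ ≥ 0 and define the variance-penalized expectation of a probability measure κ as VPE(κ) = E_κ[X] − λ·Var_κ[X]. Then for every p ∈ [0,1], VPE(p•μ + (1−p)•ν) = p·VPE(μ) + (1−p)·VPE(ν) − λ·p·(1−p)·(E_μ[X] − E_ν[X])², and consequently VPE(p•μ + (1−p)•ν) ≤ max(VPE(μ), VPE(ν)). -/

import Mathlib

/-!
Mixing two laws mixes the first and second moments linearly, so the variance of the mixture is
the mixed variance plus the variance `p (1 - p) (E_μ X - E_ν X)²` of the two means.  Hence the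
VPE of the mixture is the mixed VPE minus `λ p (1 - p) (E_μ X - E_ν X)² ≥ 0`, and a convex
combination of two reals is at most their maximum.
-/

open MeasureTheory ProbabilityTheory

section Mixture

variable {Ω : Type*} [MeasurableSpace Ω] {μ ν : Measure Ω}

lemma isProbabilityMeasure_ofReal_smul_add [IsProbabilityMeasure μ] [IsProbabilityMeasure ν]
    {p : ℝ} (hp : p ∈ Set.Icc (0 : ℝ) 1) :
    IsProbabilityMeasure (ENNReal.ofReal p • μ + ENNReal.ofReal (1 - p) • ν) where
  measure_univ := by
    simp only [Measure.add_apply, Measure.smul_apply, measure_univ, smul_eq_mul, mul_one]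
    rw [← ENNReal.ofReal_add hp.1 (sub_nonneg.2 hp.2), add_sub_cancel, ENNReal.ofReal_one]

lemma integral_ofReal_smul_add {f : Ω → ℝ} (hμ : Integrable f μ) (hν : Integrable f ν)
    {a b : ℝ} (ha : 0 ≤ a) (hb : 0 ≤ b) :
    ∫ ω, f ω ∂(ENNReal.ofReal a • μ + ENNReal.ofReal b • ν)
      = a * ∫ ω, f ω ∂μ + b * ∫ ω, f ω ∂ν := by
  rw [integral_add_measure (hμ.smul_measure ENNReal.ofReal_ne_top)
      (hν.smul_measure ENNReal.ofReal_ne_top), integral_smul_measure, integral_smul_measure,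
    ENNReal.toReal_ofReal ha, ENNReal.toReal_ofReal hb, smul_eq_mul, smul_eq_mul]

lemma MeasureTheory.MemLp.two_add_measure {X : Ω → ℝ} (hμ : MemLp X 2 μ) (hν : MemLp X 2 ν) :
    MemLp X 2 (μ + ν) := by
  rw [memLp_two_iff_integrable_sq (hμ.1.add_measure hν.1)]
  exact hμ.integrable_sq.add_measure hν.integrable_sq

lemma variance_ofReal_smul_add [IsProbabilityMeasure μ] [IsProbabilityMeasure ν] {X : Ω → ℝ}
    (hμ : MemLp X 2 μ) (hν : MemLp X 2 ν) {p : ℝ} (hp : p ∈ Set.Icc (0 : ℝ) 1) :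
    variance X (ENNReal.ofReal p • μ + ENNReal.ofReal (1 - p) • ν)
      = p * variance X μ + (1 - p) * variance X ν
        + p * (1 - p) * (∫ ω, X ω ∂μ - ∫ ω, X ω ∂ν) ^ 2 := by
  have := isProbabilityMeasure_ofReal_smul_add (μ := μ) (ν := ν) hp
  have hq : 0 ≤ 1 - p := sub_nonneg.2 hp.2
  have hmix : MemLp X 2 (ENNReal.ofReal p • μ + ENNReal.ofReal (1 - p) • ν) :=
    (hμ.smul_measure ENNReal.ofReal_ne_top).two_add_measure
      (hν.smul_measure ENNReal.ofReal_ne_top)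
  simp only [variance_eq_sub hmix, variance_eq_sub hμ, variance_eq_sub hν, Pi.pow_apply,
    integral_ofReal_smul_add hμ.integrable_sq hν.integrable_sq hp.1 hq,
    integral_ofReal_smul_add (hμ.integrable one_le_two) (hν.integrable one_le_two) hp.1 hq]
  ring

end Mixture

theorem vpe_mixture_general {Ω : Type*} [MeasurableSpace Ω] (X : Ω → ℝ)
    (μ ν : Measure Ω)
    [IsProbabilityMeasure μ] [IsProbabilityMeasure ν]
    (hμ : MemLp X 2 μ) (hν : MemLp X 2 ν)
    (lam : ℝ) (hlam : 0 ≤ lam)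
    (VPE : Measure Ω → ℝ)
    (hVPE : ∀ κ : Measure Ω, VPE κ = (∫ ω, X ω ∂κ) - lam * variance X κ) :
    ∀ p : ℝ, p ∈ Set.Icc (0 : ℝ) 1 →
      VPE (ENNReal.ofReal p • μ + ENNReal.ofReal (1 - p) • ν)
        = p * VPE μ + (1 - p) * VPE ν
          - lam * p * (1 - p) * (∫ ω, X ω ∂μ - ∫ ω, X ω ∂ν) ^ 2 ∧
      VPE (ENNReal.ofReal p • μ + ENNReal.ofReal (1 - p) • ν) ≤ max (VPE μ) (VPE ν) := by
  intro p hp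
  have hq : 0 ≤ 1 - p := sub_nonneg.2 hp.2
  have hformula : VPE (ENNReal.ofReal p • μ + ENNReal.ofReal (1 - p) • ν)
      = p * VPE μ + (1 - p) * VPE ν
        - lam * p * (1 - p) * (∫ ω, X ω ∂μ - ∫ ω, X ω ∂ν) ^ 2 := by
    rw [hVPE, hVPE, hVPE, variance_ofReal_smul_add hμ hν hp,
      integral_ofReal_smul_add (hμ.integrable one_le_two) (hν.integrable one_le_two) hp.1 hq]
    ring
  refine ⟨hformula, ?_⟩
  have hpenalty : 0 ≤ lam * p * (1 - p) * (∫ ω, X ω ∂μ - ∫ ω, X ω ∂ν) ^ 2 :=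
    mul_nonneg (mul_nonneg (mul_nonneg hlam hp.1) hq) (sq_nonneg _)
  calc _ ≤ p * VPE μ + (1 - p) * VPE ν := hformula ▸ sub_le_self _ hpenalty
    _ ≤ max (VPE μ) (VPE ν) := Convex.combo_le_max _ _ hp.1 hq (add_sub_cancel p 1)

/-- The variance-penalized expectation of a mixture of two probability measures:
exact formula and upper bound by the max of the two VPEs. -/
theorem vpe_mixture {Ω : Type*} [MeasurableSpace Ω] (X : Ω → ℝ)
    (hX : Measurable X) (μ ν : Measure Ω)
    [IsProbabilityMeasure μ] [IsProbabilityMeasure ν]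
    (hμ : MemLp X 2 μ) (hν : MemLp X 2 ν)
    (lam : ℝ) (hlam : 0 ≤ lam)
    (VPE : Measure Ω → ℝ)
    (hVPE : ∀ κ : Measure Ω, VPE κ = (∫ ω, X ω ∂κ) - lam * variance X κ) :
    ∀ p : ℝ, p ∈ Set.Icc (0 : ℝ) 1 →
      VPE (ENNReal.ofReal p • μ + ENNReal.ofReal (1 - p) • ν)
        = p * VPE μ + (1 - p) * VPE ν
          - lam * p * (1 - p) * (∫ ω, X ω ∂μ - ∫ ω, X ω ∂ν) ^ 2 ∧
      VPE (ENNReal.ofReal p • μ + ENNReal.ofReal (1 - p) • ν) ≤ max (VPE μ) (VPE ν) :=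
  vpe_mixture_general X μ ν hμ hν lam hlam VPE hVPE
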